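/- Let G be a group and R a commutative ring, and let Cof(RG) denote the class of cofibrant RG-modules. Then: every projective RG-module is cofibrant; for any short exact sequence 0 → L → M → N → 0 of RG-modules with N cofibrant, M is cofibrant if and only if L is cofibrant; and if L and M are cofibrant and Ext^1_{RG}(N, Q) = 0 for every RG-module Q of finite projective dimension, then N is cofibrant. -/

import Mathlib

universe u

open Function

noncomputable section

/-- `M` is a Gorenstein projective `A`-module: it is (isomorphic to) a syzygy of a totally
acyclic complex of projective `A`-modules. -/
def IsGorensteinProjective (A : Type u) [Ring A] (M : Type u) [AddCommGroup M] [Module A M] :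
    Prop :=
  ∃ (X : ℤ → ModuleCat.{u} A) (d : ∀ n : ℤ, ↥(X (n + 1)) →ₗ[A] ↥(X n)),
    (∀ n, Module.Projective A ↥(X n)) ∧
    (∀ n, LinearMap.range (d (n + 1)) = LinearMap.ker (d n)) ∧
    (∀ (Q : ModuleCat.{u} A), Module.Projective A ↥Q →
      ∀ (n : ℤ) (f : ↥(X (n + 1)) →ₗ[A] ↥Q), f.comp (d (n + 1)) = 0 →
        ∃ g : ↥(X n) →ₗ[A] ↥Q, g.comp (d n) = f) ∧
    ∃ n : ℤ, Nonempty (M ≃ₗ[A] ↥(LinearMap.ker (d n)))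

/-- `gpdLEAux A n M` : the Gorenstein projective dimension of `M` is at most `n`,
expressed through resolutions by Gorenstein projective modules. -/
def gpdLEAux (A : Type u) [Ring A] : ℕ → ModuleCat.{u} A → Prop
  | 0, M => IsGorensteinProjective A ↥M
  | n + 1, M =>
    ∃ (K N : ModuleCat.{u} A) (i : ↥K →ₗ[A] ↥N) (p : ↥N →ₗ[A] ↥M),
      IsGorensteinProjective A ↥N ∧ Injective i ∧ Surjective p ∧
        LinearMap.range i = LinearMap.ker p ∧ gpdLEAux A n K

def GpdLE (A : Type u) [Ring A] (n : ℕ) (M : Type u) [AddCommGroup M] [Module A M] : Prop :=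
  gpdLEAux A n (ModuleCat.of A M)

/-- The Gorenstein projective dimension of `M` over `A`, as an extended natural number. -/
def Gpd (A : Type u) [Ring A] (M : Type u) [AddCommGroup M] [Module A M] : ℕ∞ :=
  sInf {n : ℕ∞ | ∃ m : ℕ, (m : ℕ∞) = n ∧ GpdLE A m M}

def pdLEAux (A : Type u) [Ring A] : ℕ → ModuleCat.{u} A → Prop
  | 0, M => Module.Projective A ↥M
  | n + 1, M =>
    ∃ (K N : ModuleCat.{u} A) (i : ↥K →ₗ[A] ↥N) (p : ↥N →ₗ[A] ↥M),
      Module.Projective A ↥N ∧ Injective i ∧ Surjective p ∧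
        LinearMap.range i = LinearMap.ker p ∧ pdLEAux A n K

def PdLE (A : Type u) [Ring A] (n : ℕ) (M : Type u) [AddCommGroup M] [Module A M] : Prop :=
  pdLEAux A n (ModuleCat.of A M)

/-- The projective dimension of `M` over `A`, as an extended natural number. -/
def Pd (A : Type u) [Ring A] (M : Type u) [AddCommGroup M] [Module A M] : ℕ∞ :=
  sInf {n : ℕ∞ | ∃ m : ℕ, (m : ℕ∞) = n ∧ PdLE A m M}

def idLEAux (A : Type u) [Ring A] : ℕ → ModuleCat.{u} A → Prop
  | 0, M => Module.Injective A ↥M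
  | n + 1, M =>
    ∃ (I C : ModuleCat.{u} A) (i : ↥M →ₗ[A] ↥I) (p : ↥I →ₗ[A] ↥C),
      Module.Injective A ↥I ∧ Injective i ∧ Surjective p ∧
        LinearMap.range i = LinearMap.ker p ∧ idLEAux A n C

def IdLE (A : Type u) [Ring A] (n : ℕ) (M : Type u) [AddCommGroup M] [Module A M] : Prop :=
  idLEAux A n (ModuleCat.of A M)

/-- The injective dimension of `M` over `A`, as an extended natural number. -/
def Injd (A : Type u) [Ring A] (M : Type u) [AddCommGroup M] [Module A M] : ℕ∞ :=
  sInf {n : ℕ∞ | ∃ m : ℕ, (m : ℕ∞) = n ∧ IdLE A m M}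

/-- The (left) Gorenstein global dimension of the ring `A`. -/
def GGldim (A : Type u) [Ring A] : ℕ∞ :=
  ⨆ M : ModuleCat.{u} A, Gpd A ↥M

/-- `A` is left Gorenstein regular if its Gorenstein global dimension is finite. -/
def IsGorensteinRegular (A : Type u) [Ring A] : Prop :=
  GGldim A ≠ ⊤

/-- `spli A`: the supremum of the projective dimensions of injective `A`-modules. -/
def Spli (A : Type u) [Ring A] : ℕ∞ :=
  ⨆ (M : ModuleCat.{u} A) (_ : Module.Injective A ↥M), Pd A ↥M

/-- `silp A`: the supremum of the injective dimensions of projective `A`-modules. -/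
def Silp (A : Type u) [Ring A] : ℕ∞ :=
  ⨆ (M : ModuleCat.{u} A) (_ : Module.Projective A ↥M), Injd A ↥M

/-- The finitistic dimension of `A`. -/
def FinDim (A : Type u) [Ring A] : ℕ∞ :=
  ⨆ (M : ModuleCat.{u} A) (_ : Pd A ↥M ≠ ⊤), Pd A ↥M

/-- The augmentation ring homomorphism `RG →+* R`. -/
def augmentation (R : Type u) [Ring R] (G : Type u) [Group G] : MonoidAlgebra R G →+* R :=
  MonoidAlgebra.liftNCRingHom (RingHom.id R) 1 fun _ _ => Commute.one_right _

/-- `R` viewed as the trivial module over the group ring `R[G]`. -/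
def Triv (R : Type u) (G : Type u) : Type u := R

instance (R G : Type u) [Ring R] : AddCommGroup (Triv R G) :=
  inferInstanceAs (AddCommGroup R)

instance (R G : Type u) [Ring R] [Group G] : Module (MonoidAlgebra R G) (Triv R G) :=
  Module.compHom R (augmentation R G)

/-- The Gorenstein cohomological dimension of the group `G` over `R`, i.e. the
Gorenstein projective dimension of the trivial `R[G]`-module `R`. -/
def Gcd (R : Type u) [Ring R] (G : Type u) [Group G] : ℕ∞ :=
  Gpd (MonoidAlgebra R G) (Triv R G)

/-- Restriction of scalars along `R →+* R[G]`. -/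
def resR (R G : Type u) [Ring R] [Group G] (M : Type u) [AddCommGroup M]
    [Module (MonoidAlgebra R G) M] : Module R M :=
  Module.compHom M (MonoidAlgebra.singleOneRingHom : R →+* MonoidAlgebra R G)

/-- Restriction of scalars along `R[H] →+* R[G]` for a subgroup `H ≤ G`. -/
def resSubgroup (R G : Type u) [Ring R] [Group G] (H : Subgroup G) (M : Type u)
    [AddCommGroup M] [Module (MonoidAlgebra R G) M] : Module (MonoidAlgebra R ↥H) M :=
  Module.compHom M (MonoidAlgebra.mapDomainRingHom R H.subtype)

section Comm

variable (R G : Type u) [CommRing R] [Group G]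

/-- The `G`-action on an `R[G]`-module, as a monoid homomorphism into `R`-linear
endomorphisms. -/
def gAction (X : Type u) [AddCommGroup X] [Module R X] [Module (MonoidAlgebra R G) X]
    [IsScalarTower R (MonoidAlgebra R G) X] : G →* (X →ₗ[R] X) where
  toFun g :=
    { toFun := fun x => MonoidAlgebra.single g (1 : R) • x
      map_add' := fun x y => smul_add _ x y
      map_smul' := fun r x => by
        simpa using smul_comm (MonoidAlgebra.single g (1 : R)) r x }
  map_one' := LinearMap.ext fun x => by
    show MonoidAlgebra.single (1 : G) (1 : R) • x = x
    rw [← MonoidAlgebra.one_def, one_smul]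
  map_mul' g h := LinearMap.ext fun x => by
    show MonoidAlgebra.single (g * h) (1 : R) • x =
      MonoidAlgebra.single g (1 : R) • MonoidAlgebra.single h (1 : R) • x
    rw [← mul_smul, MonoidAlgebra.single_mul_single, one_mul]

/-- The `R[G]`-module structure associated to a representation of `G` on an `R`-module. -/
def moduleOfRep {N : Type u} [AddCommGroup N] [Module R N] (ρ : G →* (N →ₗ[R] N)) :
    Module (MonoidAlgebra R G) N :=
  let φ : MonoidAlgebra R G →ₐ[R] Module.End R N := MonoidAlgebra.lift R (Module.End R N) G ρ
  { smul := fun a n => φ a n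
    one_smul := fun n => by show φ 1 n = n; rw [map_one]; rfl
    mul_smul := fun a b n => by show φ (a * b) n = φ a (φ b n); rw [map_mul]; rfl
    smul_zero := fun a => map_zero (φ a)
    smul_add := fun a m n => map_add (φ a) m n
    add_smul := fun a b n => by show φ (a + b) n = φ a n + φ b n; rw [map_add]; rfl
    zero_smul := fun n => by show φ 0 n = 0; rw [map_zero]; rfl }

/-- The diagonal representation of `G` on `X ⊗[R] Y`, for `R[G]`-modules `X`, `Y`. -/
def diagRep (X Y : Type u) [AddCommGroup X] [Module R X] [Module (MonoidAlgebra R G) X]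
    [IsScalarTower R (MonoidAlgebra R G) X] [AddCommGroup Y] [Module R Y]
    [Module (MonoidAlgebra R G) Y] [IsScalarTower R (MonoidAlgebra R G) Y] :
    G →* (TensorProduct R X Y →ₗ[R] TensorProduct R X Y) where
  toFun g := TensorProduct.map (gAction R G X g) (gAction R G Y g)
  map_one' := by
    show TensorProduct.map ((gAction R G X) 1) ((gAction R G Y) 1) = 1
    rw [map_one, map_one, Module.End.one_eq_id, Module.End.one_eq_id, TensorProduct.map_id,
      Module.End.one_eq_id]
  map_mul' g h := by
    show TensorProduct.map ((gAction R G X) (g * h)) ((gAction R G Y) (g * h)) =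
      TensorProduct.map ((gAction R G X) g) ((gAction R G Y) g) *
        TensorProduct.map ((gAction R G X) h) ((gAction R G Y) h)
    rw [map_mul, map_mul, Module.End.mul_eq_comp, Module.End.mul_eq_comp, TensorProduct.map_comp,
      Module.End.mul_eq_comp]

/-- The diagonal `R[G]`-module structure on `X ⊗[R] Y`, given by `g • (x ⊗ y) = g x ⊗ g y`. -/
def diagModule (X Y : Type u) [AddCommGroup X] [Module R X] [Module (MonoidAlgebra R G) X]
    [IsScalarTower R (MonoidAlgebra R G) X] [AddCommGroup Y] [Module R Y]
    [Module (MonoidAlgebra R G) Y] [IsScalarTower R (MonoidAlgebra R G) Y] :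
    Module (MonoidAlgebra R G) (TensorProduct R X Y) :=
  moduleOfRep R G (diagRep R G X Y)

end Comm

section BMod

variable (G R : Type u) [Group G] [CommRing R]

/-- Functions from `G` to `R` taking finitely many values, as a submodule of `G → R`. -/
def BSet : Submodule R (G → R) where
  carrier := {f : G → R | (Set.range f).Finite}
  add_mem' := by
    intro f g hf hg
    refine (Set.Finite.image2 (· + ·) hf hg).subset ?_
    rintro - ⟨x, rfl⟩
    exact Set.mem_image2_of_mem ⟨x, rfl⟩ ⟨x, rfl⟩
  zero_mem' := by
    refine (Set.finite_singleton (0 : R)).subset ?_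
    rintro - ⟨x, rfl⟩
    simp
  smul_mem' := by
    intro c f hf
    refine (hf.image (c * ·)).subset ?_
    rintro - ⟨x, rfl⟩
    exact ⟨f x, ⟨x, rfl⟩, by simp⟩

/-- Benson's module `B(G, R)` of functions from `G` to `R` taking finitely many values. -/
def BMod : Type u := ↥(BSet G R)

instance : AddCommGroup (BMod G R) := inferInstanceAs (AddCommGroup ↥(BSet G R))

instance : Module R (BMod G R) := inferInstanceAs (Module R ↥(BSet G R))

/-- Translation of a finitely-valued function by a group element. -/
def bTranslate (g : G) (f : BMod G R) : BMod G R :=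
  ⟨fun g' => f.1 (g⁻¹ * g'),
    Set.Finite.subset f.2 (by rintro - ⟨x, rfl⟩; exact ⟨g⁻¹ * x, rfl⟩)⟩

@[simp] lemma bTranslate_apply (g : G) (f : BMod G R) (g' : G) :
    (bTranslate G R g f).1 g' = f.1 (g⁻¹ * g') := rfl

/-- The translation representation of `G` on `B(G, R)`: `(g • f) g' = f (g⁻¹ g')`. -/
def bAction : G →* (BMod G R →ₗ[R] BMod G R) where
  toFun g :=
    { toFun := bTranslate G R g
      map_add' := fun f h => rfl
      map_smul' := fun r f => rfl }
  map_one' := LinearMap.ext fun f => Subtype.ext (funext fun g' => by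
    show (bTranslate G R 1 f).1 g' = f.1 g'
    simp [bTranslate])
  map_mul' g h := LinearMap.ext fun f => Subtype.ext (funext fun g' => by
    show (bTranslate G R (g * h) f).1 g' = (bTranslate G R g (bTranslate G R h f)).1 g'
    simp [bTranslate, mul_assoc])

instance : Module (MonoidAlgebra R G) (BMod G R) := moduleOfRep R G (bAction G R)

instance : IsScalarTower R (MonoidAlgebra R G) (BMod G R) := by
  constructor
  intro r a f
  show (MonoidAlgebra.lift R (Module.End R (BMod G R)) G (bAction G R)) (r • a) f =
    r • (MonoidAlgebra.lift R (Module.End R (BMod G R)) G (bAction G R)) a f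
  rw [map_smul]
  rfl

end BMod

section Cof

variable (R G : Type u) [CommRing R] [Group G]

/-- Benson's cofibrant condition: `M ⊗[R] B(G,R)` with the diagonal action is a projective
`R[G]`-module. -/
def IsCofibrant (M : Type u) [AddCommGroup M] [Module R M] [Module (MonoidAlgebra R G) M]
    [IsScalarTower R (MonoidAlgebra R G) M] : Prop :=
  letI := diagModule R G M (BMod G R)
  Module.Projective (MonoidAlgebra R G) (TensorProduct R M (BMod G R))

/-- The projective dimension over `R[G]` of `M ⊗[R] B(G,R)` with the diagonal action. -/
def pdOfTensorB (M : Type u) [AddCommGroup M] [Module R M] [Module (MonoidAlgebra R G) M]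
    [IsScalarTower R (MonoidAlgebra R G) M] : ℕ∞ :=
  letI := diagModule R G M (BMod G R)
  Pd (MonoidAlgebra R G) (TensorProduct R M (BMod G R))

end Cof


section BFreeZ

variable (G : Type u) [Group G]

/-- The `ℤ`-module of finite-range integer-valued functions on `G`. -/
def BZset : Submodule ℤ (G → ℤ) where
  carrier := {f : G → ℤ | (Set.range f).Finite}
  add_mem' := by
    intro f g hf hg
    refine (Set.Finite.image2 (· + ·) hf hg).subset ?_
    rintro - ⟨x, rfl⟩
    exact Set.mem_image2_of_mem ⟨x, rfl⟩ ⟨x, rfl⟩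
  zero_mem' := by
    refine (Set.finite_singleton (0 : ℤ)).subset ?_
    rintro - ⟨x, rfl⟩
    simp
  smul_mem' := by
    intro c f hf
    refine (hf.image (c * ·)).subset ?_
    rintro - ⟨x, rfl⟩
    exact ⟨f x, ⟨x, rfl⟩, by simp [smul_eq_mul]⟩

/-- Finite-range integer functions on `G`. -/
def BZ : Type u := ↥(BZset G)

instance : AddCommGroup (BZ G) := inferInstanceAs (AddCommGroup ↥(BZset G))
instance : Module ℤ (BZ G) := inferInstanceAs (Module ℤ ↥(BZset G))

/-- Restriction along `pure : G → Ultrafilter G`. -/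
def lcToB : LocallyConstant (Ultrafilter G) ℤ →ₗ[ℤ] BZ G where
  toFun f := ⟨fun g => f (pure g), (f.range_finite).subset
    (by rintro - ⟨g, rfl⟩; exact ⟨pure g, rfl⟩)⟩
  map_add' f g := Subtype.ext (funext fun x => rfl)
  map_smul' n f := Subtype.ext (funext fun x => rfl)

lemma lcToB_injective : Injective (lcToB G) := by
  intro f₁ f₂ h
  have hval : ∀ g : G, f₁ (pure g) = f₂ (pure g) := fun g =>
    congrFun (congrArg Subtype.val h) g
  have heq : Set.EqOn ⇑f₁ ⇑f₂ (Set.range (pure : G → Ultrafilter G)) := by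
    rintro - ⟨g, rfl⟩
    exact hval g
  exact LocallyConstant.coe_injective
    (Continuous.ext_on denseRange_pure f₁.continuous f₂.continuous heq)

lemma lcToB_surjective : Surjective (lcToB G) := by
  intro h
  have hex : ∀ U : Ultrafilter G, ∃ a, a ∈ Set.range h.1 ∧ Ultrafilter.map h.1 U = pure a := by
    intro U
    obtain ⟨a, ha, hU⟩ := Ultrafilter.eq_pure_of_finite_mem (f := Ultrafilter.map h.1 U) h.2 (by
      rw [Ultrafilter.mem_map, Set.preimage_range]
      exact Filter.univ_mem)
    exact ⟨a, ha, hU⟩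
  choose av hav hUv using hex
  have hkey : ∀ U : Ultrafilter G, h.1 ⁻¹' {av U} ∈ U := by
    intro U
    have hmem : ({av U} : Set ℤ) ∈ Ultrafilter.map h.1 U := by
      rw [hUv U]
      exact Ultrafilter.mem_pure.mpr rfl
    rwa [Ultrafilter.mem_map] at hmem
  have hloc : IsLocallyConstant av := by
    rw [IsLocallyConstant.iff_exists_open]
    intro U
    refine ⟨{V : Ultrafilter G | h.1 ⁻¹' {av U} ∈ V},
      ultrafilter_isOpen_basic _, hkey U, ?_⟩
    intro V hV
    obtain ⟨g, hg1, hg2⟩ := Filter.nonempty_of_mem (Filter.inter_mem (hkey V) hV)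
    have e1 : h.1 g = av V := hg1
    have e2 : h.1 g = av U := hg2
    rw [← e1, e2]
  refine ⟨⟨av, hloc⟩, ?_⟩
  apply Subtype.ext
  funext g
  have hg : g ∈ h.1 ⁻¹' {av (pure g)} := Ultrafilter.mem_pure.mp (hkey (pure g))
  exact hg.symm

instance bzFree : Module.Free ℤ (BZ G) := by
  haveI h1 := LocallyConstant.freeOfProfinite (Profinite.of (Ultrafilter G))
  haveI h2 : Module.Free ℤ (LocallyConstant (Ultrafilter G) ℤ) := h1
  exact Module.Free.of_equiv
    (LinearEquiv.ofBijective (lcToB G) ⟨lcToB_injective G, lcToB_surjective G⟩)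

end BFreeZ

section BFreeR

variable (R : Type u) [CommRing R] (G : Type u) [Group G]

/-- Indicator function in `BMod G R`. -/
def chiR (A : Set G) : BMod G R :=
  ⟨Set.indicator A (fun _ => (1 : R)), ((Set.finite_singleton (1:R)).insert 0).subset (by
    rintro - ⟨g, rfl⟩
    by_cases hg : g ∈ A
    · rw [Set.indicator_of_mem hg]; exact Set.mem_insert_of_mem _ rfl
    · rw [Set.indicator_of_notMem hg]; exact Set.mem_insert _ _)⟩

/-- Indicator function in `BZ G`. -/
def chiZ (A : Set G) : BZ G :=
  ⟨Set.indicator A (fun _ => (1 : ℤ)), ((Set.finite_singleton (1:ℤ)).insert 0).subset (by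
    rintro - ⟨g, rfl⟩
    by_cases hg : g ∈ A
    · rw [Set.indicator_of_mem hg]; exact Set.mem_insert_of_mem _ rfl
    · rw [Set.indicator_of_notMem hg]; exact Set.mem_insert _ _)⟩

/-- Coefficient extension `BZ G → BMod G R`. -/
def castB : BZ G →ₗ[ℤ] BMod G R where
  toFun f := ⟨fun g => ((f.1 g : ℤ) : R), (f.2.image (fun n : ℤ => (n : R))).subset
    (by rintro - ⟨g, rfl⟩; exact ⟨f.1 g, ⟨g, rfl⟩, rfl⟩)⟩
  map_add' f g := Subtype.ext (funext fun x => by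
    show ((f.1 x + g.1 x : ℤ) : R) = ((f.1 x : ℤ) : R) + ((g.1 x : ℤ) : R)
    push_cast
    ring)
  map_smul' n f := Subtype.ext (funext fun x => by
    show ((n * f.1 x : ℤ) : R) = n • ((f.1 x : ℤ) : R)
    rw [zsmul_eq_mul]
    push_cast
    ring)

/-- Evaluation at a point, as a linear functional on `BMod G R`. -/
def evalB (g : G) : BMod G R →ₗ[R] R where
  toFun f := f.1 g
  map_add' f h := rfl
  map_smul' r f := rfl

/-- Evaluation at a point on `BZ G`. -/
def evalZ (g : G) : BZ G →ₗ[ℤ] ℤ where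
  toFun f := f.1 g
  map_add' f h := rfl
  map_smul' r f := rfl

lemma chiR_eq_cast (A : Set G) : chiR R G A = castB R G (chiZ G A) := by
  apply Subtype.ext
  funext g
  show Set.indicator A (fun _ => (1:R)) g = ((Set.indicator A (fun _ => (1:ℤ)) g : ℤ) : R)
  by_cases hg : g ∈ A
  · rw [Set.indicator_of_mem hg, Set.indicator_of_mem hg]; simp
  · rw [Set.indicator_of_notMem hg, Set.indicator_of_notMem hg]; simp

/-- The candidate basis of `BMod G R`. -/
def vB : Module.Free.ChooseBasisIndex ℤ (BZ G) → BMod G R :=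
  fun k => castB R G (Module.Free.chooseBasis ℤ (BZ G) k)

lemma bmod_repr (f : BMod G R) :
    f = ∑ r ∈ f.2.toFinset, r • chiR R G (f.1 ⁻¹' {r}) := by
  apply Subtype.ext
  funext g
  have hsum := map_sum (evalB R G g) (fun r => r • chiR R G (f.1 ⁻¹' {r})) f.2.toFinset
  refine Eq.trans ?_ hsum.symm
  rw [Finset.sum_eq_single (f.1 g)]
  · rw [map_smul, smul_eq_mul]
    show f.1 g = f.1 g * Set.indicator (f.1 ⁻¹' {f.1 g}) (fun _ => (1:R)) g
    rw [Set.indicator_of_mem (by exact rfl : g ∈ f.1 ⁻¹' {f.1 g}), mul_one]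
  · intro r _ hr
    rw [map_smul, smul_eq_mul]
    show r * Set.indicator (f.1 ⁻¹' {r}) (fun _ => (1:R)) g = 0
    rw [Set.indicator_of_notMem (by simpa using (Ne.symm hr)), mul_zero]
  · intro hmem
    exact absurd (f.2.mem_toFinset.mpr ⟨g, rfl⟩) hmem

lemma castB_mem_span (x : BZ G) :
    castB R G x ∈ Submodule.span R (Set.range (vB R G)) := by
  have hx : x ∈ Submodule.span ℤ (Set.range (Module.Free.chooseBasis ℤ (BZ G))) := by
    rw [Module.Basis.span_eq]
    trivial
  induction hx using Submodule.span_induction with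
  | mem y hy =>
      obtain ⟨k, rfl⟩ := hy
      exact Submodule.subset_span ⟨k, rfl⟩
  | zero => rw [map_zero]; exact Submodule.zero_mem _
  | add y z _ _ hy' hz' => rw [map_add]; exact Submodule.add_mem _ hy' hz'
  | smul n y _ hy' =>
      rw [map_smul, ← Int.cast_smul_eq_zsmul R]
      exact Submodule.smul_mem _ _ hy'

lemma bmod_span : ⊤ ≤ Submodule.span R (Set.range (vB R G)) := by
  intro f _
  rw [bmod_repr R G f]
  refine Submodule.sum_mem _ fun r _ => Submodule.smul_mem _ _ ?_
  rw [chiR_eq_cast]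
  exact castB_mem_span R G _

lemma bmod_li : LinearIndependent R (vB R G) := by
  classical
  rw [linearIndependent_iff']
  intro s c hrel k₀ hk₀
  set b := Module.Free.chooseBasis ℤ (BZ G) with hb
  set m : G → (↥s → ℤ) := fun x j => (b j.1).1 x with hm
  have hfin : (Set.range m).Finite := by
    refine Set.Finite.subset (Set.Finite.pi (fun j : ↥s => (b j.1).2)) ?_
    rintro - ⟨x, rfl⟩
    intro j _
    exact ⟨x, rfl⟩
  set t : (↥s → ℤ) → G := Function.invFun m with ht
  have htm : ∀ x : G, m (t (m x)) = m x := fun x => Function.invFun_eq ⟨x, rfl⟩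
  set e : (↥s → ℤ) → BZ G := fun w => chiZ G (m ⁻¹' {w}) with he
  have hkey : ∀ j : ↥s, (b j.1) = ∑ w ∈ hfin.toFinset, ((b j.1).1 (t w)) • e w := by
    intro j
    apply Subtype.ext
    funext x
    have hsum := map_sum (evalZ G x) (fun w => ((b j.1).1 (t w)) • e w) hfin.toFinset
    refine Eq.trans ?_ hsum.symm
    rw [Finset.sum_eq_single (m x)]
    · rw [map_smul, smul_eq_mul]
      show (b j.1).1 x = (b j.1).1 (t (m x)) * Set.indicator (m ⁻¹' {m x}) (fun _ => (1:ℤ)) x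
      rw [Set.indicator_of_mem (by exact rfl : x ∈ m ⁻¹' {m x}), mul_one]
      have := congrFun (htm x) j
      exact this.symm
    · intro w _ hw
      rw [map_smul, smul_eq_mul]
      show (b j.1).1 (t w) * Set.indicator (m ⁻¹' {w}) (fun _ => (1:ℤ)) x = 0
      rw [Set.indicator_of_notMem (by simpa using (Ne.symm hw)), mul_zero]
    · intro hmem
      exact absurd (hfin.mem_toFinset.mpr ⟨x, rfl⟩) hmem
  have hvals : ∀ x : G, (∑ k ∈ s, c k * (((b k).1 x : ℤ) : R)) = 0 := by
    intro x
    have h := congrArg (evalB R G x) hrel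
    rw [map_sum, map_zero] at h
    have hterm : ∀ k ∈ s, evalB R G x (c k • vB R G k) = c k * (((b k).1 x : ℤ) : R) := by
      intro k _
      rw [map_smul, smul_eq_mul]
      rfl
    rwa [Finset.sum_congr rfl hterm] at h
  have hzero : (∑ w ∈ hfin.toFinset,
      ((b.coord k₀ (e w) : ℤ) : R) * (∑ k ∈ s, c k * (((b k).1 (t w) : ℤ) : R))) = 0 := by
    refine Finset.sum_eq_zero fun w _ => ?_
    rw [hvals (t w), mul_zero]
  have hswap : (∑ w ∈ hfin.toFinset,
        ((b.coord k₀ (e w) : ℤ) : R) * (∑ k ∈ s, c k * (((b k).1 (t w) : ℤ) : R)))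
      = ∑ k ∈ s, c k *
          ((∑ w ∈ hfin.toFinset, b.coord k₀ (e w) * (b k).1 (t w) : ℤ) : R) := by
    calc (∑ w ∈ hfin.toFinset,
          ((b.coord k₀ (e w) : ℤ) : R) * (∑ k ∈ s, c k * (((b k).1 (t w) : ℤ) : R)))
        = ∑ w ∈ hfin.toFinset, ∑ k ∈ s,
            c k * (((b.coord k₀ (e w) : ℤ) : R) * (((b k).1 (t w) : ℤ) : R)) := by
          refine Finset.sum_congr rfl fun w _ => ?_
          rw [Finset.mul_sum]
          exact Finset.sum_congr rfl fun k _ => by ring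
      _ = ∑ k ∈ s, ∑ w ∈ hfin.toFinset,
            c k * (((b.coord k₀ (e w) : ℤ) : R) * (((b k).1 (t w) : ℤ) : R)) :=
          Finset.sum_comm
      _ = ∑ k ∈ s, c k *
            ((∑ w ∈ hfin.toFinset, b.coord k₀ (e w) * (b k).1 (t w) : ℤ) : R) := by
          refine Finset.sum_congr rfl fun k _ => ?_
          rw [← Finset.mul_sum]
          congr 1
          push_cast
          rfl
  have hinner : ∀ k ∈ s, (∑ w ∈ hfin.toFinset, b.coord k₀ (e w) * (b k).1 (t w))
      = (if k = k₀ then (1:ℤ) else 0) := by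
    intro k hk
    have h1 : (∑ w ∈ hfin.toFinset, b.coord k₀ (e w) * (b k).1 (t w))
        = b.coord k₀ (∑ w ∈ hfin.toFinset, ((b k).1 (t w)) • e w) := by
      rw [map_sum]
      refine Finset.sum_congr rfl fun w _ => ?_
      rw [map_smul, smul_eq_mul, mul_comm]
    rw [h1, ← hkey ⟨k, hk⟩, Module.Basis.coord_apply, Module.Basis.repr_self, Finsupp.single_apply]
  have hfinal : (∑ k ∈ s, c k * (((if k = k₀ then (1:ℤ) else 0) : ℤ) : R)) = 0 := by
    rw [← Finset.sum_congr rfl (fun k hk => by rw [hinner k hk] :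
      ∀ k ∈ s, c k * ((∑ w ∈ hfin.toFinset, b.coord k₀ (e w) * (b k).1 (t w) : ℤ) : R)
        = c k * (((if k = k₀ then (1:ℤ) else 0) : ℤ) : R)), ← hswap]
    exact hzero
  rw [Finset.sum_eq_single k₀] at hfinal
  · rw [if_pos rfl] at hfinal
    simpa using hfinal
  · intro k _ hkne
    rw [if_neg hkne]
    simp
  · intro habs
    exact absurd hk₀ habs

/-- `B(G,R)` is a free `R`-module (via Nöbeling's theorem). -/
noncomputable def bmodBasis : Module.Basis (Module.Free.ChooseBasisIndex ℤ (BZ G)) R (BMod G R) :=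
  Module.Basis.mk (bmod_li R G) (bmod_span R G)

end BFreeR

section Plumb

set_option synthInstance.maxHeartbeats 1000000
set_option maxHeartbeats 1600000

variable (R G : Type u) [CommRing R] [Group G]

lemma moduleOfRep_single_smul {N : Type u} [AddCommGroup N] [Module R N]
    (ρ : G →* (N →ₗ[R] N)) (g : G) (r : R) (x : N) :
    (letI := moduleOfRep R G ρ; (MonoidAlgebra.single g r • x : N)) = r • ρ g x := by
  show (MonoidAlgebra.lift R (Module.End R N) G ρ) (MonoidAlgebra.single g r) x = r • ρ g x
  rw [MonoidAlgebra.lift_single]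
  rfl

lemma moduleOfRep_isScalarTower {N : Type u} [AddCommGroup N] [Module R N]
    (ρ : G →* (N →ₗ[R] N)) :
    (letI := moduleOfRep R G ρ; IsScalarTower R (MonoidAlgebra R G) N) := by
  letI := moduleOfRep R G ρ
  constructor
  intro r a x
  show (MonoidAlgebra.lift R (Module.End R N) G ρ) (r • a) x =
    r • (MonoidAlgebra.lift R (Module.End R N) G ρ) a x
  rw [map_smul]
  rfl

variable {R G}

/-- `single g r • x = r • (single g 1 • x)` in any tower module. -/
lemma single_smul_eq {X : Type u} [AddCommGroup X] [Module R X] [Module (MonoidAlgebra R G) X]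
    [IsScalarTower R (MonoidAlgebra R G) X] (g : G) (r : R) (x : X) :
    (MonoidAlgebra.single g r : MonoidAlgebra R G) • x
      = r • ((MonoidAlgebra.single g 1 : MonoidAlgebra R G) • x) := by
  rw [← smul_assoc]
  congr 1
  rw [MonoidAlgebra.smul_single', mul_one]

lemma smul_comm_rg {X : Type u} [AddCommGroup X] [Module R X] [Module (MonoidAlgebra R G) X]
    [IsScalarTower R (MonoidAlgebra R G) X] (r : R) (a : MonoidAlgebra R G) (x : X) :
    a • (r • x) = r • (a • x) := by
  have h1 : r • x = (r • (1 : MonoidAlgebra R G)) • x := by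
    rw [smul_assoc, one_smul]
  rw [h1, ← mul_smul, mul_smul_comm, mul_one, smul_assoc]

/-- smul by `single g 1` as an `R`-linear map. -/
def gsmul (X : Type u) [AddCommGroup X] [Module R X] [Module (MonoidAlgebra R G) X]
    [IsScalarTower R (MonoidAlgebra R G) X] (g : G) : X →ₗ[R] X where
  toFun x := (MonoidAlgebra.single g 1 : MonoidAlgebra R G) • x
  map_add' := smul_add _
  map_smul' r x := by simp [smul_comm_rg]

/-- Criterion: an `R`-linear map commuting with the `G`-action is `RG`-linear. -/
def mkRG {X Y : Type u} [AddCommGroup X] [Module R X] [Module (MonoidAlgebra R G) X]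
    [IsScalarTower R (MonoidAlgebra R G) X] [AddCommGroup Y] [Module R Y]
    [Module (MonoidAlgebra R G) Y] [IsScalarTower R (MonoidAlgebra R G) Y]
    (f : X →ₗ[R] Y)
    (h : ∀ (g : G) (x : X), f ((MonoidAlgebra.single g 1 : MonoidAlgebra R G) • x)
        = (MonoidAlgebra.single g 1 : MonoidAlgebra R G) • f x) :
    X →ₗ[MonoidAlgebra R G] Y where
  toFun := f
  map_add' := f.map_add
  map_smul' a x := by
    show f (a • x) = a • f x
    induction a using MonoidAlgebra.induction_linear with
    | zero => simp only [zero_smul, map_zero]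
    | add a b ha hb => rw [add_smul, add_smul, map_add, ha, hb]
    | single g r =>
        rw [single_smul_eq, map_smul, h, ← single_smul_eq]



variable (R G)

/-- `X ⊗[R] B(G,R)` with the diagonal `RG`-action, instance-registered. -/
abbrev TB (X : Type u) [AddCommGroup X] [Module R X] [Module (MonoidAlgebra R G) X]
    [IsScalarTower R (MonoidAlgebra R G) X] : Type u := TensorProduct R X (BMod G R)

section TBInst
variable (X : Type u) [AddCommGroup X] [Module R X] [Module (MonoidAlgebra R G) X]
    [IsScalarTower R (MonoidAlgebra R G) X]

@[reducible] instance : AddCommGroup (TB R G X) :=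
  TensorProduct.addCommGroup

@[reducible] instance : Module R (TB R G X) :=
  TensorProduct.instModule

instance (priority := high) : Module (MonoidAlgebra R G) (TB R G X) :=
  diagModule R G X (BMod G R)

instance (priority := high) : DistribMulAction (MonoidAlgebra R G) (TB R G X) :=
  (diagModule R G X (BMod G R)).toDistribMulAction

instance (priority := high) : SMul (MonoidAlgebra R G) (TB R G X) :=
  (diagModule R G X (BMod G R)).toDistribMulAction.toMulAction.toSMul

instance : IsScalarTower R (MonoidAlgebra R G) (TB R G X) :=
  moduleOfRep_isScalarTower R G (diagRep R G X (BMod G R))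

/-- The canonical tensor, typed in `TB`. -/
abbrev TB.tmul (x : X) (y : BMod G R) : TB R G X := x ⊗ₜ[R] y

lemma TB.tmul_eq (x : X) (y : BMod G R) : TB.tmul R G X x y = x ⊗ₜ[R] y := rfl

lemma TB.single_smul (g : G) (r : R) (x : X) (y : BMod G R) :
    (MonoidAlgebra.single g r : MonoidAlgebra R G) • (TB.tmul R G X x y)
      = r • (((MonoidAlgebra.single g 1 : MonoidAlgebra R G) • x) ⊗ₜ[R]
          ((MonoidAlgebra.single g 1 : MonoidAlgebra R G) • y)) := by
  show (MonoidAlgebra.lift R (Module.End R (TensorProduct R X (BMod G R))) G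
      (diagRep R G X (BMod G R))) (MonoidAlgebra.single g r) (x ⊗ₜ[R] y) = _
  rw [MonoidAlgebra.lift_single]
  have : (diagRep R G X (BMod G R)) g (x ⊗ₜ[R] y)
      = ((MonoidAlgebra.single g 1 : MonoidAlgebra R G) • x) ⊗ₜ[R]
        ((MonoidAlgebra.single g 1 : MonoidAlgebra R G) • y) := by
    show TensorProduct.map (gAction R G X g) (gAction R G (BMod G R) g) (x ⊗ₜ[R] y) = _
    rw [TensorProduct.map_tmul]
    rfl
  exact congrArg (r • ·) this

lemma TB.gsmul_tmul (g : G) (x : X) (y : BMod G R) :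
    (MonoidAlgebra.single g 1 : MonoidAlgebra R G) • (TB.tmul R G X x y)
      = ((MonoidAlgebra.single g 1 : MonoidAlgebra R G) • x) ⊗ₜ[R]
          ((MonoidAlgebra.single g 1 : MonoidAlgebra R G) • y) := by
  rw [TB.single_smul, one_smul]

end TBInst

variable {R G}

/-- `rTensor`, typed on `TB`. -/
def TB.rT {X X' : Type u} [AddCommGroup X] [Module R X] [Module (MonoidAlgebra R G) X]
    [IsScalarTower R (MonoidAlgebra R G) X] [AddCommGroup X'] [Module R X']
    [Module (MonoidAlgebra R G) X'] [IsScalarTower R (MonoidAlgebra R G) X']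
    (f : X →ₗ[MonoidAlgebra R G] X') : TB R G X →ₗ[R] TB R G X' :=
  LinearMap.rTensor (BMod G R) (f.restrictScalars R)

/-- Functoriality of `TB` in `RG`-linear maps. -/
def TB.map {X X' : Type u} [AddCommGroup X] [Module R X] [Module (MonoidAlgebra R G) X]
    [IsScalarTower R (MonoidAlgebra R G) X] [AddCommGroup X'] [Module R X']
    [Module (MonoidAlgebra R G) X'] [IsScalarTower R (MonoidAlgebra R G) X']
    (f : X →ₗ[MonoidAlgebra R G] X') :
    TB R G X →ₗ[MonoidAlgebra R G] TB R G X' :=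
  mkRG (TB.rT f) (by
    intro g z
    induction z using TensorProduct.induction_on with
    | zero => rw [smul_zero, map_zero, smul_zero]
    | add z w hz hw => rw [smul_add, map_add, map_add, hz, hw, smul_add]
    | tmul x y =>
        rw [TB.gsmul_tmul]
        show TB.tmul R G X' (f ((MonoidAlgebra.single g 1 : MonoidAlgebra R G) • x))
            ((MonoidAlgebra.single g 1 : MonoidAlgebra R G) • y)
          = (MonoidAlgebra.single g 1 : MonoidAlgebra R G) • TB.tmul R G X' (f x) y
        rw [f.map_smul, TB.gsmul_tmul])

lemma TB.map_coe {X X' : Type u} [AddCommGroup X] [Module R X] [Module (MonoidAlgebra R G) X]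
    [IsScalarTower R (MonoidAlgebra R G) X] [AddCommGroup X'] [Module R X']
    [Module (MonoidAlgebra R G) X'] [IsScalarTower R (MonoidAlgebra R G) X']
    (f : X →ₗ[MonoidAlgebra R G] X') (z : TB R G X) :
    TB.map f z = LinearMap.rTensor (BMod G R) (f.restrictScalars R) z := rfl

instance bmod_free : Module.Free R (BMod G R) := Module.Free.of_basis (bmodBasis R G)

lemma isCofibrant_iff (M : Type u) [AddCommGroup M] [Module R M]
    [Module (MonoidAlgebra R G) M] [IsScalarTower R (MonoidAlgebra R G) M] :
    IsCofibrant R G M ↔ Module.Projective (MonoidAlgebra R G) (TB R G M) := Iff.rfl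

section Part2

variable {L M N : Type u}
    [AddCommGroup L] [Module R L] [Module (MonoidAlgebra R G) L]
    [IsScalarTower R (MonoidAlgebra R G) L]
    [AddCommGroup M] [Module R M] [Module (MonoidAlgebra R G) M]
    [IsScalarTower R (MonoidAlgebra R G) M]
    [AddCommGroup N] [Module R N] [Module (MonoidAlgebra R G) N]
    [IsScalarTower R (MonoidAlgebra R G) N]
    (i : L →ₗ[MonoidAlgebra R G] M) (p : M →ₗ[MonoidAlgebra R G] N)

lemma tbmap_surjective (hp : Surjective p) : Surjective (TB.map (R := R) (G := G) p) := by
  have h : Surjective (LinearMap.rTensor (BMod G R) (p.restrictScalars R)) :=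
    LinearMap.rTensor_surjective (BMod G R) hp
  exact h

lemma tbmap_injective (hi : Injective i) : Injective (TB.map (R := R) (G := G) i) := by
  have h : Injective (LinearMap.rTensor (BMod G R) (i.restrictScalars R)) :=
    Module.Flat.rTensor_preserves_injective_linearMap (M := BMod G R)
      (i.restrictScalars R) hi
  exact h

lemma tbmap_exact (hp : Surjective p) (hex : LinearMap.range i = LinearMap.ker p) :
    Function.Exact (TB.map (R := R) (G := G) i) (TB.map (R := R) (G := G) p) := by
  have hexact : Function.Exact ⇑i ⇑p := LinearMap.exact_iff.mpr hex.symm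
  have hex' : Function.Exact (i.restrictScalars R) (p.restrictScalars R) := hexact
  have h := rTensor_exact (R := R) (BMod G R) hex' hp
  exact h

lemma part2_aux (hi : Injective i) (hp : Surjective p)
    (hex : LinearMap.range i = LinearMap.ker p)
    (hN : Module.Projective (MonoidAlgebra R G) (TB R G N)) :
    Module.Projective (MonoidAlgebra R G) (TB R G M)
      ↔ Module.Projective (MonoidAlgebra R G) (TB R G L) := by
  haveI := hN
  set j := TB.map (R := R) (G := G) i with hj
  set q := TB.map (R := R) (G := G) p with hq
  obtain ⟨s, hs⟩ := Module.projective_lifting_property q LinearMap.id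
    (tbmap_surjective p hp)
  have hqs : ∀ z, q (s z) = z := fun z => by
    have := LinearMap.congr_fun hs z; simpa using this
  have hqj : ∀ l, q (j l) = 0 := fun l => by
    have := (tbmap_exact i p hp hex).apply_apply_eq_zero l
    exact this
  set φ : (TB R G L × TB R G N) →ₗ[MonoidAlgebra R G] TB R G M := LinearMap.coprod j s with hφ
  have hbij : Bijective φ := by
    constructor
    · intro a b hab
      have h1 : q (φ a) = q (φ b) := congrArg q hab
      have hqφ : ∀ c : TB R G L × TB R G N, q (φ c) = c.2 := by
        intro c
        simp only [hφ, LinearMap.coprod_apply, map_add, hqj, hqs, zero_add]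
      rw [hqφ, hqφ] at h1
      have h2 : j a.1 = j b.1 := by
        have := hab
        simp only [hφ, LinearMap.coprod_apply, h1] at this
        exact add_right_cancel this
      have := tbmap_injective i hi h2
      exact Prod.ext this h1
    · intro x
      have hx : x - s (q x) ∈ LinearMap.ker q := by
        simp [LinearMap.mem_ker, map_sub, hqs]
      rw [hq, LinearMap.exact_iff.mp (tbmap_exact i p hp hex)] at hx
      obtain ⟨l, hl⟩ := hx
      exact ⟨(l, q x), by simp [hφ, hj, hq, LinearMap.coprod_apply, hl]⟩
  set e := LinearEquiv.ofBijective φ hbij with he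
  constructor
  · intro hM
    haveI := hM
    refine Module.Projective.of_split (R := MonoidAlgebra R G)
      (M := TB R G M) j ((LinearMap.fst _ _ _).comp (e.symm.toLinearMap)) ?_
    refine LinearMap.ext fun l => ?_
    have : e.symm (j l) = (l, 0) := by
      apply e.injective
      simp only [LinearEquiv.apply_symm_apply]
      show j l = φ (l, 0)
      simp [hφ]
    simp [this]
  · intro hL
    haveI := hL
    exact Module.Projective.of_equiv e

end Part2

section Part1

variable (R G)
variable (P : Type u) [AddCommGroup P] [Module R P] [Module (MonoidAlgebra R G) P]
    [IsScalarTower R (MonoidAlgebra R G) P]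

lemma projective_R_of_projective_RG (h : Module.Projective (MonoidAlgebra R G) P) :
    Module.Projective R P := by
  obtain ⟨s, hs⟩ := Module.projective_def'.mp h
  haveI : Module.Free R (MonoidAlgebra R G) := Module.Free.of_basis (MonoidAlgebra.basis G R)
  exact Module.Projective.of_split (R := R) (M := P →₀ MonoidAlgebra R G)
    (s.restrictScalars R)
    ((Finsupp.linearCombination (MonoidAlgebra R G) id).restrictScalars R)
    (by ext x; exact LinearMap.congr_fun hs x)

/-- scalar multiplication as an `R`-bilinear map. -/
def smulLin : MonoidAlgebra R G →ₗ[R] P →ₗ[R] P where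
  toFun a :=
    { toFun := fun x => a • x
      map_add' := smul_add a
      map_smul' := fun r x => smul_comm_rg r a x }
  map_add' a b := LinearMap.ext fun x => add_smul a b x
  map_smul' r a := LinearMap.ext fun x => smul_assoc r a x

/-- The counit `RG ⊗[R] P → P`. -/
def indCounit : TensorProduct R (MonoidAlgebra R G) P →ₗ[MonoidAlgebra R G] P :=
  mkRG (TensorProduct.lift (smulLin R G P)) (by
    intro g z
    induction z using TensorProduct.induction_on with
    | zero => rw [smul_zero, map_zero, smul_zero]
    | add z w hz hw => rw [smul_add, map_add, map_add, hz, hw, smul_add]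
    | tmul a x =>
        rw [TensorProduct.smul_tmul']
        show ((MonoidAlgebra.single g 1 : MonoidAlgebra R G) • a) • x
          = (MonoidAlgebra.single g 1 : MonoidAlgebra R G) • (a • x)
        rw [smul_eq_mul, mul_smul])

lemma indCounit_surjective : Surjective (indCounit R G P) := fun x =>
  ⟨(1 : MonoidAlgebra R G) ⊗ₜ[R] x, one_smul _ x⟩

/-- The big induced module `RG ⊗[R] (P ⊗[R] B)`. -/
abbrev BigInd : Type u :=
  TensorProduct R (MonoidAlgebra R G) (TensorProduct R P (BMod G R))

/-- `R[G] ⊗ W ≃ (G →₀ W)`. -/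
def mfsl (W : Type u) [AddCommGroup W] [Module R W] :
    TensorProduct R (MonoidAlgebra R G) W ≃ₗ[R] (G →₀ W) :=
  letI := Classical.decEq G
  (TensorProduct.congr (MonoidAlgebra.coeffLinearEquiv R) (LinearEquiv.refl R W)).trans
    (TensorProduct.finsuppScalarLeft R W G)

lemma mfsl_single (W : Type u) [AddCommGroup W] [Module R W] (h : G) (r : R) (w : W) :
    mfsl R G W ((MonoidAlgebra.single h r : MonoidAlgebra R G) ⊗ₜ[R] w)
      = Finsupp.single h (r • w) := by
  letI := Classical.decEq G
  ext i
  simp only [mfsl, LinearEquiv.trans_apply, TensorProduct.congr_tmul, LinearEquiv.refl_apply,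
    MonoidAlgebra.coeffLinearEquiv_apply, MonoidAlgebra.coeff_single]
  rw [TensorProduct.finsuppScalarLeft_apply_tmul_apply]
  by_cases hi : h = i
  · subst hi; simp
  · simp [Finsupp.single_apply, hi]

lemma mfsl_symm_single (W : Type u) [AddCommGroup W] [Module R W] (h : G) (w : W) :
    (mfsl R G W).symm (Finsupp.single h w)
      = (MonoidAlgebra.single h 1 : MonoidAlgebra R G) ⊗ₜ[R] w := by
  apply (mfsl R G W).injective
  rw [LinearEquiv.apply_symm_apply, mfsl_single, one_smul]

/-- untwisting, positive direction, `R`-linear. -/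
def untwistAuxP : TB R G (TensorProduct R (MonoidAlgebra R G) P)
    →ₗ[R] BigInd R G P :=
  letI := Classical.decEq G
  ((mfsl R G (TensorProduct R P (BMod G R))).symm.toLinearMap.comp
    ((Finsupp.lsum R (fun g => (Finsupp.lsingle g).comp
        (LinearMap.lTensor P (gsmul (R := R) (BMod G R) g⁻¹)))).comp
      (mfsl R G (TensorProduct R P (BMod G R))).toLinearMap)).comp
    (TensorProduct.assoc R (MonoidAlgebra R G) P (BMod G R)).toLinearMap

/-- untwisting, negative direction, `R`-linear. -/
def untwistAuxN : BigInd R G P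
    →ₗ[R] TB R G (TensorProduct R (MonoidAlgebra R G) P) :=
  letI := Classical.decEq G
  (TensorProduct.assoc R (MonoidAlgebra R G) P (BMod G R)).symm.toLinearMap.comp
    ((mfsl R G (TensorProduct R P (BMod G R))).symm.toLinearMap.comp
      ((Finsupp.lsum R (fun g => (Finsupp.lsingle g).comp
          (LinearMap.lTensor P (gsmul (R := R) (BMod G R) g)))).comp
        (mfsl R G (TensorProduct R P (BMod G R))).toLinearMap))

lemma untwistAuxP_single (h : G) (r : R) (p : P) (b : BMod G R) :
    untwistAuxP R G P (((MonoidAlgebra.single h r : MonoidAlgebra R G) ⊗ₜ[R] p) ⊗ₜ[R] b)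
      = (MonoidAlgebra.single h r : MonoidAlgebra R G) ⊗ₜ[R]
          (p ⊗ₜ[R] (gsmul (R := R) (BMod G R) h⁻¹ b)) := by
  letI := Classical.decEq G
  have h1 : untwistAuxP R G P (((MonoidAlgebra.single h r : MonoidAlgebra R G) ⊗ₜ[R] p) ⊗ₜ[R] b)
      = (mfsl R G (TensorProduct R P (BMod G R))).symm
          ((Finsupp.lsum R (fun g => (Finsupp.lsingle g).comp
            (LinearMap.lTensor P (gsmul (R := R) (BMod G R) g⁻¹))))
            ((mfsl R G (TensorProduct R P (BMod G R)))
              ((MonoidAlgebra.single h r : MonoidAlgebra R G) ⊗ₜ[R] (p ⊗ₜ[R] b)))) := rfl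
  rw [h1, mfsl_single, Finsupp.lsum_single, LinearMap.comp_apply,
    map_smul, LinearMap.lTensor_tmul, Finsupp.lsingle_apply, ← Finsupp.smul_single,
    map_smul, mfsl_symm_single,
    TensorProduct.smul_tmul', MonoidAlgebra.smul_single', mul_one]

lemma untwistAuxN_single (h : G) (r : R) (p : P) (b : BMod G R) :
    untwistAuxN R G P ((MonoidAlgebra.single h r : MonoidAlgebra R G) ⊗ₜ[R]
        (p ⊗ₜ[R] b))
      = ((MonoidAlgebra.single h r : MonoidAlgebra R G) ⊗ₜ[R] p) ⊗ₜ[R]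
          (gsmul (R := R) (BMod G R) h b) := by
  letI := Classical.decEq G
  have h1 : untwistAuxN R G P ((MonoidAlgebra.single h r : MonoidAlgebra R G) ⊗ₜ[R] (p ⊗ₜ[R] b))
      = (TensorProduct.assoc R (MonoidAlgebra R G) P (BMod G R)).symm
        ((mfsl R G (TensorProduct R P (BMod G R))).symm
          ((Finsupp.lsum R (fun g => (Finsupp.lsingle g).comp
            (LinearMap.lTensor P (gsmul (R := R) (BMod G R) g))))
            ((mfsl R G (TensorProduct R P (BMod G R)))
              ((MonoidAlgebra.single h r : MonoidAlgebra R G) ⊗ₜ[R] (p ⊗ₜ[R] b))))) := rfl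
  rw [h1, mfsl_single, Finsupp.lsum_single, LinearMap.comp_apply,
    map_smul, LinearMap.lTensor_tmul, Finsupp.lsingle_apply, ← Finsupp.smul_single,
    map_smul, mfsl_symm_single,
    map_smul, TensorProduct.assoc_symm_tmul,
    TensorProduct.smul_tmul', TensorProduct.smul_tmul', MonoidAlgebra.smul_single', mul_one]

lemma leftsmul_single {W : Type u} [AddCommGroup W] [Module R W] (g h : G) (r : R) (w : W) :
    (MonoidAlgebra.single g 1 : MonoidAlgebra R G) •
      ((MonoidAlgebra.single h r : MonoidAlgebra R G) ⊗ₜ[R] w)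
    = (MonoidAlgebra.single (g*h) r : MonoidAlgebra R G) ⊗ₜ[R] w := by
  rw [TensorProduct.smul_tmul', smul_eq_mul, MonoidAlgebra.single_mul_single, one_mul]

lemma gsmul_gsmul {X : Type u} [AddCommGroup X] [Module R X] [Module (MonoidAlgebra R G) X]
    [IsScalarTower R (MonoidAlgebra R G) X] (g h : G) (x : X) :
    (MonoidAlgebra.single g 1 : MonoidAlgebra R G) •
      ((MonoidAlgebra.single h 1 : MonoidAlgebra R G) • x)
    = (MonoidAlgebra.single (g*h) 1 : MonoidAlgebra R G) • x := by
  rw [← mul_smul, MonoidAlgebra.single_mul_single, one_mul]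

lemma gsmul_apply {X : Type u} [AddCommGroup X] [Module R X] [Module (MonoidAlgebra R G) X]
    [IsScalarTower R (MonoidAlgebra R G) X] (g : G) (x : X) :
    gsmul (R := R) X g x = (MonoidAlgebra.single g 1 : MonoidAlgebra R G) • x := rfl

lemma msingle (h : G) (r : R) :
    (MonoidAlgebra.ofCoeff (Finsupp.single h r) : MonoidAlgebra R G) = MonoidAlgebra.single h r := rfl

/-- untwisting as an `RG`-linear map. -/
def untwistP : TB R G (TensorProduct R (MonoidAlgebra R G) P)
    →ₗ[MonoidAlgebra R G] BigInd R G P :=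
  mkRG (untwistAuxP R G P) (by
    intro g z
    induction z using TensorProduct.induction_on with
    | zero => rw [smul_zero, map_zero, smul_zero]
    | add z w hz hw => rw [smul_add, map_add, map_add, hz, hw, smul_add]
    | tmul x b =>
        rw [TB.gsmul_tmul]
        induction x using TensorProduct.induction_on with
        | zero => simp only [smul_zero, TensorProduct.zero_tmul, map_zero]
        | add x y hx hy =>
            simp only [smul_add, TensorProduct.add_tmul, map_add] at hx hy ⊢
            rw [hx, hy]
        | tmul a p =>
            induction a using MonoidAlgebra.induction_linear with
            | zero =>
                simp only [TensorProduct.zero_tmul, smul_zero, map_zero]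
            | add a a' ha ha' =>
                simp only [TensorProduct.add_tmul, smul_add, map_add] at ha ha' ⊢
                rw [ha, ha']
            | single h r =>
                rw [leftsmul_single]
                refine ((untwistAuxP_single R G P (g*h) r p _).trans ?_).trans
                  (congrArg (fun t => (MonoidAlgebra.single g 1 : MonoidAlgebra R G) • t)
                    (untwistAuxP_single R G P h r p b)).symm
                rw [leftsmul_single]
                congr 2
                rw [gsmul_apply, gsmul_apply, ← mul_smul,
                  MonoidAlgebra.single_mul_single, one_mul]
                have hg : (g*h)⁻¹ * g = h⁻¹ := by group
                rw [hg])

/-- untwisting inverse as an `RG`-linear map. -/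
def untwistN : BigInd R G P
    →ₗ[MonoidAlgebra R G] TB R G (TensorProduct R (MonoidAlgebra R G) P) :=
  mkRG (untwistAuxN R G P) (by
    intro g z
    induction z using TensorProduct.induction_on with
    | zero => rw [smul_zero, map_zero, smul_zero]
    | add z w hz hw => rw [smul_add, map_add, map_add, hz, hw, smul_add]
    | tmul a w =>
        induction w using TensorProduct.induction_on with
        | zero => simp only [TensorProduct.tmul_zero, smul_zero, map_zero]
        | add x y hx hy =>
            simp only [TensorProduct.tmul_add, smul_add, map_add] at hx hy ⊢
            rw [hx, hy]
        | tmul p b =>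
            induction a using MonoidAlgebra.induction_linear with
            | zero => simp only [TensorProduct.zero_tmul, smul_zero, map_zero]
            | add a a' ha ha' =>
                simp only [TensorProduct.add_tmul, smul_add, map_add] at ha ha' ⊢
                rw [ha, ha']
            | single h r =>
                rw [leftsmul_single]
                refine ((untwistAuxN_single R G P (g*h) r p b).trans ?_).trans
                  (congrArg (fun t : TB R G (TensorProduct R (MonoidAlgebra R G) P) =>
                      (MonoidAlgebra.single g 1 : MonoidAlgebra R G) • t)
                    (untwistAuxN_single R G P h r p b)).symm
                refine Eq.trans ?_ (TB.gsmul_tmul R G (TensorProduct R (MonoidAlgebra R G) P) g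
                  (MonoidAlgebra.single h r ⊗ₜ[R] p) (gsmul (R := R) (BMod G R) h b)).symm
                rw [leftsmul_single]
                congr 1
                rw [gsmul_apply, gsmul_apply, ← mul_smul,
                  MonoidAlgebra.single_mul_single, one_mul])

set_option maxRecDepth 8000 in
lemma untwistN_untwistP (z : TB R G (TensorProduct R (MonoidAlgebra R G) P)) :
    untwistN R G P (untwistP R G P z) = z := by
  show untwistAuxN R G P (untwistAuxP R G P z) = z
  induction z using TensorProduct.induction_on with
  | zero => rw [map_zero, map_zero]
  | add z w hz hw => rw [map_add, map_add, hz, hw]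
  | tmul x b =>
      induction x using TensorProduct.induction_on with
      | zero => simp only [TensorProduct.zero_tmul, map_zero]
      | add x y hx hy =>
          simp only [TensorProduct.add_tmul, map_add] at hx hy ⊢
          rw [hx, hy]
      | tmul a p =>
          induction a using MonoidAlgebra.induction_linear with
          | zero => simp only [TensorProduct.zero_tmul, map_zero]
          | add a a' ha ha' =>
              simp only [TensorProduct.add_tmul, map_add] at ha ha' ⊢
              rw [ha, ha']
          | single h r =>
              refine ((congrArg (untwistAuxN R G P) (untwistAuxP_single R G P h r p b)).trans
                ((untwistAuxN_single R G P h r p _))).trans ?_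
              congr 1
              rw [gsmul_apply, gsmul_apply, ← mul_smul, MonoidAlgebra.single_mul_single,
                one_mul, mul_inv_cancel, ← MonoidAlgebra.one_def, one_smul]

set_option maxRecDepth 8000 in
lemma part1 (hP : Module.Projective (MonoidAlgebra R G) P) :
    Module.Projective (MonoidAlgebra R G) (TB R G P) := by
  haveI := hP
  haveI : Module.Projective R P := projective_R_of_projective_RG R G P hP
  haveI : Module.Projective R (TensorProduct R P (BMod G R)) :=
    Module.Projective.tensorProduct
  haveI : Module.Projective (MonoidAlgebra R G) (BigInd R G P) :=
    Module.Projective.tensorProduct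
  obtain ⟨σ, hσ⟩ := Module.projective_lifting_property (indCounit R G P) LinearMap.id
    (indCounit_surjective R G P)
  refine Module.Projective.of_split (M := BigInd R G P)
    ((untwistP R G P).comp (TB.map σ)) ((TB.map (indCounit R G P)).comp (untwistN R G P)) ?_
  refine LinearMap.ext fun z => ?_
  show TB.map (indCounit R G P) (untwistN R G P (untwistP R G P (TB.map σ z))) = z
  rw [untwistN_untwistP]
  rw [TB.map_coe, TB.map_coe, ← LinearMap.rTensor_comp_apply]
  have hcomp : ((indCounit R G P).restrictScalars R).comp (σ.restrictScalars R)
      = LinearMap.id (R := R) (M := P) := by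
    ext x
    exact LinearMap.congr_fun hσ x
  rw [hcomp, LinearMap.rTensor_id, LinearMap.id_apply]


end Part1

section Part3

variable (R G)

/-- The constant function `1` in `B(G,R)`. -/
def oneB : BMod G R :=
  ⟨fun _ => (1 : R), Set.Finite.subset (Set.finite_singleton 1) (by rintro - ⟨x, rfl⟩; simp)⟩

lemma bmod_gsmul (g : G) (f : BMod G R) :
    (MonoidAlgebra.single g 1 : MonoidAlgebra R G) • f = bTranslate G R g f := by
  have h := moduleOfRep_single_smul R G (bAction G R) g 1 f
  exact h.trans (one_smul R _)

lemma gsmul_oneB (g : G) :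
    (MonoidAlgebra.single g 1 : MonoidAlgebra R G) • (oneB R G) = oneB R G := by
  rw [bmod_gsmul]
  exact Subtype.ext (funext fun _ => rfl)

/-- Pointwise multiplication on `B(G,R)` as a bilinear map. -/
def mulB : BMod G R →ₗ[R] BMod G R →ₗ[R] BMod G R where
  toFun f :=
    { toFun := fun h => ⟨fun g => f.1 g * h.1 g, by
        refine (Set.Finite.image2 (· * ·) f.2 h.2).subset ?_
        rintro - ⟨x, rfl⟩
        exact Set.mem_image2_of_mem ⟨x, rfl⟩ ⟨x, rfl⟩⟩
      map_add' := fun a b => Subtype.ext (funext fun g => mul_add _ _ _)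
      map_smul' := fun r a => Subtype.ext (funext fun g => by
        show f.1 g * (r * a.1 g) = r * (f.1 g * a.1 g)
        ring) }
  map_add' a b := LinearMap.ext fun c => Subtype.ext (funext fun g => add_mul _ _ _)
  map_smul' r a := LinearMap.ext fun c => Subtype.ext (funext fun g => by
    show r * a.1 g * c.1 g = r * (a.1 g * c.1 g)
    ring)

lemma mulB_oneB (f : BMod G R) : mulB R G (oneB R G) f = f :=
  Subtype.ext (funext fun g => one_mul _)

lemma mulB_gsmul (g : G) (f h : BMod G R) :
    mulB R G ((MonoidAlgebra.single g 1 : MonoidAlgebra R G) • f)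
        ((MonoidAlgebra.single g 1 : MonoidAlgebra R G) • h)
      = (MonoidAlgebra.single g 1 : MonoidAlgebra R G) • mulB R G f h := by
  rw [bmod_gsmul, bmod_gsmul, bmod_gsmul]
  exact Subtype.ext (funext fun x => rfl)

variable (X : Type u) [AddCommGroup X] [Module R X] [Module (MonoidAlgebra R G) X]
    [IsScalarTower R (MonoidAlgebra R G) X]

/-- `x ↦ x ⊗ 1`, typed on `TB`. -/
def unitAux : X →ₗ[R] TB R G X := (TensorProduct.mk R X (BMod G R)).flip (oneB R G)

/-- The unit `X → X ⊗ B`, `x ↦ x ⊗ 1`. -/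
def unitTB : X →ₗ[MonoidAlgebra R G] TB R G X :=
  mkRG (unitAux R G X) (by
    intro g x
    show TB.tmul R G X ((MonoidAlgebra.single g 1 : MonoidAlgebra R G) • x) (oneB R G)
      = (MonoidAlgebra.single g 1 : MonoidAlgebra R G) • TB.tmul R G X x (oneB R G)
    rw [TB.gsmul_tmul, gsmul_oneB])

lemma unitTB_apply (x : X) : unitTB R G X x = TB.tmul R G X x (oneB R G) := rfl

/-- `(x ⊗ b) ⊗ b' ↦ x ⊗ b b'`, typed on `TB`. -/
def psiAux : TB R G (TB R G X) →ₗ[R] TB R G X :=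
  (LinearMap.lTensor X (TensorProduct.lift (mulB R G))).comp
      (TensorProduct.assoc R X (BMod G R) (BMod G R)).toLinearMap

/-- The multiplication map `(X ⊗ B) ⊗ B → X ⊗ B`. -/
def psiTB : TB R G (TB R G X) →ₗ[MonoidAlgebra R G] TB R G X :=
  mkRG (psiAux R G X) (by
    intro g z
    induction z using TensorProduct.induction_on with
    | zero => rw [smul_zero, map_zero, smul_zero]
    | add z w hz hw => rw [smul_add, map_add, map_add, hz, hw, smul_add]
    | tmul x b =>
        rw [TB.gsmul_tmul]
        induction x using TensorProduct.induction_on with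
        | zero => simp only [smul_zero, TensorProduct.zero_tmul, map_zero]
        | add x y hx hy =>
            simp only [smul_add, TensorProduct.add_tmul, map_add] at hx hy ⊢
            rw [hx, hy]
        | tmul n b2 =>
            have hgx : (MonoidAlgebra.single g 1 : MonoidAlgebra R G) •
                (TB.tmul R G X n b2)
                = ((MonoidAlgebra.single g 1 : MonoidAlgebra R G) • n) ⊗ₜ[R]
                    ((MonoidAlgebra.single g 1 : MonoidAlgebra R G) • b2) :=
              TB.gsmul_tmul R G X g n b2
            refine (congrArg (fun t => (LinearMap.lTensor X (TensorProduct.lift (mulB R G)))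
                ((TensorProduct.assoc R X (BMod G R) (BMod G R))
                  (t ⊗ₜ[R] ((MonoidAlgebra.single g 1 : MonoidAlgebra R G) • b)))) hgx).trans ?_
            show ((MonoidAlgebra.single g 1 : MonoidAlgebra R G) • n) ⊗ₜ[R]
                (mulB R G ((MonoidAlgebra.single g 1 : MonoidAlgebra R G) • b2)
                  ((MonoidAlgebra.single g 1 : MonoidAlgebra R G) • b))
              = (MonoidAlgebra.single g 1 : MonoidAlgebra R G) •
                  TB.tmul R G X n (mulB R G b2 b)
            rw [mulB_gsmul, TB.gsmul_tmul])

lemma psiTB_tmul (n : X) (b2 b : BMod G R) :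
    psiTB R G X (TB.tmul R G (TB R G X) (TB.tmul R G X n b2) b)
      = TB.tmul R G X n (mulB R G b2 b) := rfl

lemma pd_ne_top_of_projective (A : Type u) [Ring A] (X : Type u) [AddCommGroup X] [Module A X]
    (h : Module.Projective A X) : Pd A X ≠ ⊤ := by
  have h0 : (0 : ℕ∞) ∈ {n : ℕ∞ | ∃ m : ℕ, (m : ℕ∞) = n ∧ PdLE A m X} := ⟨0, rfl, h⟩
  intro htop
  have := sInf_eq_top.mp htop (0 : ℕ∞) h0
  exact (by simp : (0:ℕ∞) ≠ ⊤) this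

variable {R G}

lemma part3_aux {L M N : Type u}
    [AddCommGroup L] [Module R L] [Module (MonoidAlgebra R G) L]
    [IsScalarTower R (MonoidAlgebra R G) L]
    [AddCommGroup M] [Module R M] [Module (MonoidAlgebra R G) M]
    [IsScalarTower R (MonoidAlgebra R G) M]
    [AddCommGroup N] [Module R N] [Module (MonoidAlgebra R G) N]
    [IsScalarTower R (MonoidAlgebra R G) N]
    (i : L →ₗ[MonoidAlgebra R G] M) (p : M →ₗ[MonoidAlgebra R G] N)
    (hi : Injective i) (hp : Surjective p) (hex : LinearMap.range i = LinearMap.ker p)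
    (hL : Module.Projective (MonoidAlgebra R G) (TB R G L))
    (hM : Module.Projective (MonoidAlgebra R G) (TB R G M))
    (hyp : ∀ (Q E : ModuleCat.{u} (MonoidAlgebra R G))
        (j : ↥Q →ₗ[MonoidAlgebra R G] ↥E) (q : ↥E →ₗ[MonoidAlgebra R G] N),
        Pd (MonoidAlgebra R G) ↥Q ≠ ⊤ → Injective j → Surjective q →
        LinearMap.range j = LinearMap.ker q →
        ∃ s : N →ₗ[MonoidAlgebra R G] ↥E, q.comp s = LinearMap.id) :
    Module.Projective (MonoidAlgebra R G) (TB R G N) := by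
  classical
  set θ : (TB R G M × N) →ₗ[MonoidAlgebra R G] TB R G N :=
    (TB.map p).comp (LinearMap.fst _ _ _) - (unitTB R G N).comp (LinearMap.snd _ _ _) with hθ
  set Y := LinearMap.ker θ with hY
  have hmem : ∀ l : TB R G L, ((LinearMap.inl _ _ _).comp (TB.map (R:=R) (G:=G) i)) l ∈ Y := by
    intro l
    rw [hY, LinearMap.mem_ker, hθ]
    simp only [LinearMap.sub_apply, LinearMap.comp_apply, LinearMap.fst_apply,
      LinearMap.snd_apply, LinearMap.inl_apply, map_zero, sub_zero]
    exact (tbmap_exact i p hp hex).apply_apply_eq_zero l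
  set jY : TB R G L →ₗ[MonoidAlgebra R G] ↥Y :=
    LinearMap.codRestrict Y ((LinearMap.inl _ _ _).comp (TB.map i)) hmem with hjY
  set qY : ↥Y →ₗ[MonoidAlgebra R G] N := (LinearMap.snd _ _ _).comp Y.subtype with hqY
  have hjYinj : Injective jY := by
    intro a b hab
    have h1 : ((TB.map (R:=R) (G:=G) i a, (0:N)) : TB R G M × N)
        = (TB.map (R:=R) (G:=G) i b, (0:N)) := congrArg Subtype.val hab
    exact tbmap_injective i hi (congrArg Prod.fst h1)
  have hqYsurj : Surjective qY := by
    intro n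
    obtain ⟨x, hx⟩ := tbmap_surjective p hp (unitTB R G N n)
    refine ⟨⟨(x, n), ?_⟩, rfl⟩
    rw [LinearMap.mem_ker, hθ]
    simp only [LinearMap.sub_apply, LinearMap.comp_apply, LinearMap.fst_apply,
      LinearMap.snd_apply, hx, sub_self]
  have hrange : LinearMap.range jY = LinearMap.ker qY := by
    ext z
    constructor
    · rintro ⟨l, rfl⟩
      rfl
    · intro hz
      have hz2 : ((z : TB R G M × N)).2 = 0 := hz
      have hzker : θ (z : TB R G M × N) = 0 := LinearMap.mem_ker.mp z.2
      rw [hθ] at hzker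
      simp only [LinearMap.sub_apply, LinearMap.comp_apply, LinearMap.fst_apply,
        LinearMap.snd_apply, hz2, map_zero, sub_zero] at hzker
      have hmemker : ((z : TB R G M × N)).1 ∈ LinearMap.ker (TB.map (R:=R) (G:=G) p) :=
        LinearMap.mem_ker.mpr hzker
      rw [LinearMap.exact_iff.mp (tbmap_exact i p hp hex)] at hmemker
      obtain ⟨l, hl⟩ := hmemker
      refine ⟨l, ?_⟩
      apply Subtype.ext
      apply Prod.ext
      · exact hl
      · exact hz2.symm
  obtain ⟨s, hs⟩ := hyp (ModuleCat.of (MonoidAlgebra R G) (TB R G L))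
    (ModuleCat.of (MonoidAlgebra R G) ↥Y) jY qY
    (pd_ne_top_of_projective _ _ hL) hjYinj hqYsurj hrange
  let s' : N →ₗ[MonoidAlgebra R G] ↥Y := s
  have hs' : qY.comp s' = LinearMap.id := hs
  set σ : N →ₗ[MonoidAlgebra R G] TB R G M :=
    (LinearMap.fst _ _ _).comp (Y.subtype.comp s') with hσ
  have hσp : ∀ n, TB.map (R:=R) (G:=G) p (σ n) = unitTB R G N n := by
    intro n
    have h1 : θ ((s' n : TB R G M × N)) = 0 := LinearMap.mem_ker.mp (s' n).2
    have h2 : ((s' n : TB R G M × N)).2 = n := LinearMap.congr_fun hs' n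
    rw [hθ] at h1
    simp only [LinearMap.sub_apply, LinearMap.comp_apply, LinearMap.fst_apply,
      LinearMap.snd_apply, h2, sub_eq_zero] at h1
    exact h1
  haveI : Module.Projective (MonoidAlgebra R G) (TB R G (TB R G M)) := part1 R G _ hM
  refine Module.Projective.of_split (M := TB R G (TB R G M)) (TB.map σ)
    ((psiTB R G N).comp (TB.map (TB.map p))) ?_
  refine LinearMap.ext fun z => ?_
  show psiTB R G N (TB.map (TB.map (R:=R) (G:=G) p) (TB.map σ z)) = z
  induction z using TensorProduct.induction_on with
  | zero => rw [map_zero, map_zero, map_zero]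
  | add z w hz hw => rw [map_add, map_add, map_add, hz, hw]
  | tmul n b =>
      have e1 : TB.map (R:=R) (G:=G) σ (TB.tmul R G N n b)
          = TB.tmul R G (TB R G M) (σ n) b := rfl
      have e2 : TB.map (TB.map (R:=R) (G:=G) p) (TB.tmul R G (TB R G M) (σ n) b)
          = TB.tmul R G (TB R G N) (TB.map (R:=R) (G:=G) p (σ n)) b := rfl
      rw [e1, e2, hσp n, unitTB_apply]
      rw [psiTB_tmul, mulB_oneB]

end Part3

end Plumb

theorem cofibrant_basic_properties
    (R G : Type u) [CommRing R] [Group G] :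
    (∀ (P : Type u) [AddCommGroup P] [Module R P] [Module (MonoidAlgebra R G) P]
      [IsScalarTower R (MonoidAlgebra R G) P],
      Module.Projective (MonoidAlgebra R G) P → IsCofibrant R G P) ∧
    (∀ (L M N : Type u)
      [AddCommGroup L] [Module R L] [Module (MonoidAlgebra R G) L]
      [IsScalarTower R (MonoidAlgebra R G) L]
      [AddCommGroup M] [Module R M] [Module (MonoidAlgebra R G) M]
      [IsScalarTower R (MonoidAlgebra R G) M]
      [AddCommGroup N] [Module R N] [Module (MonoidAlgebra R G) N]
      [IsScalarTower R (MonoidAlgebra R G) N]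
      (i : L →ₗ[MonoidAlgebra R G] M) (p : M →ₗ[MonoidAlgebra R G] N),
      Function.Injective i → Function.Surjective p →
      LinearMap.range i = LinearMap.ker p → IsCofibrant R G N →
      (IsCofibrant R G M ↔ IsCofibrant R G L)) ∧
    (∀ (L M N : Type u)
      [AddCommGroup L] [Module R L] [Module (MonoidAlgebra R G) L]
      [IsScalarTower R (MonoidAlgebra R G) L]
      [AddCommGroup M] [Module R M] [Module (MonoidAlgebra R G) M]
      [IsScalarTower R (MonoidAlgebra R G) M]
      [AddCommGroup N] [Module R N] [Module (MonoidAlgebra R G) N]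
      [IsScalarTower R (MonoidAlgebra R G) N]
      (i : L →ₗ[MonoidAlgebra R G] M) (p : M →ₗ[MonoidAlgebra R G] N),
      Function.Injective i → Function.Surjective p →
      LinearMap.range i = LinearMap.ker p →
      IsCofibrant R G L → IsCofibrant R G M →
      (∀ (Q E : ModuleCat.{u} (MonoidAlgebra R G))
        (j : ↥Q →ₗ[MonoidAlgebra R G] ↥E) (q : ↥E →ₗ[MonoidAlgebra R G] N),
        Pd (MonoidAlgebra R G) ↥Q ≠ ⊤ → Function.Injective j → Function.Surjective q →
        LinearMap.range j = LinearMap.ker q →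
        ∃ s : N →ₗ[MonoidAlgebra R G] ↥E, q.comp s = LinearMap.id) →
      IsCofibrant R G N) := by
  refine ⟨?_, ?_, ?_⟩
  · intro P _ _ _ _ hP
    exact (isCofibrant_iff P).mpr (part1 R G P hP)
  · intro L M N _ _ _ _ _ _ _ _ _ _ _ _ i p hi hp hex hN
    rw [isCofibrant_iff, isCofibrant_iff]
    exact part2_aux i p hi hp hex ((isCofibrant_iff N).mp hN)
  · intro L M N _ _ _ _ _ _ _ _ _ _ _ _ i p hi hp hex hL hM hyp
    exact (isCofibrant_iff N).mpr (part3_aux i p hi hp hex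
      ((isCofibrant_iff L).mp hL) ((isCofibrant_iff M).mp hM) hyp)

end
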